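/- The gadget graph D(i,i',c,c') for c ≠ c', consisting of two k-cliques L = {l_1,…,l_k} and R = {r_1,…,r_k} with l_k and r_k identified into a single vertex, pigeon vertex i connected to l_1, pigeon vertex i' connected to r_1, a vertex precoloured c connected to l_2,…,l_{k-1}, and a vertex precoloured c' connected to r_2,…,r_{k-1}, has the property: a proper k-colouring extending the precolouring with i coloured b and i' coloured b' exists if and only if (b,b') ≠ (c,c'). -/
import Mathlib

lemma exists_third {k : ℕ} (hk : 3 ≤ k) (c c' : Fin k) : ∃ m : Fin k, m ≠ c ∧ m ≠ c' := by
  by_contra h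
  push_neg at h
  have hsub : (Finset.univ : Finset (Fin k)) ⊆ {c, c'} := by
    intro x _
    simp only [Finset.mem_insert, Finset.mem_singleton]
    by_cases hx : x = c
    · exact Or.inl hx
    · exact Or.inr (h x hx)
  have := Finset.card_le_card hsub
  have h2 : ({c, c'} : Finset (Fin k)).card ≤ 2 := Finset.card_insert_le _ _ |>.trans (by simp)
  simp [Finset.card_univ] at this
  omega

lemma perm2_spec {k : ℕ} (hk : 2 ≤ k) (m t : Fin k) (hmt : m ≠ t) :
    ∃ π : Equiv.Perm (Fin k), π ⟨k - 1, by omega⟩ = m ∧ π ⟨0, by omega⟩ = t := by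
  set L : Fin k := ⟨k - 1, by omega⟩ with hL
  set Z : Fin k := ⟨0, by omega⟩ with hZ
  set x : Fin k := (Equiv.swap L m) t with hx
  refine ⟨(Equiv.swap Z x).trans (Equiv.swap L m), ?_, ?_⟩
  · have hLZ : L ≠ Z := by
      simp only [hL, hZ, Ne, Fin.mk.injEq]
      omega
    have hLx : L ≠ x := by
      intro h
      apply hmt
      have h2 := congrArg (Equiv.swap L m) h
      rw [hx, Equiv.swap_apply_self, Equiv.swap_apply_left] at h2
      exact h2
    simp [Equiv.trans_apply, Equiv.swap_apply_of_ne_of_ne hLZ hLx]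
  · simp [Equiv.trans_apply, hx]

/-- Vertices of the gadget `D(i,i',c,c')` for `c ≠ c'`: two pigeon vertices,
a left `k`-clique `l_1,…,l_k`, the right clique vertices `r_1,…,r_{k-1}`
(the vertex `r_k` is identified with `l_k`), and two precoloured vertices. -/
def GadgetV' (k : ℕ) : Type := Fin 2 ⊕ Fin k ⊕ Fin (k - 1) ⊕ Fin 2

/-- Pigeon vertices `i` (for `t = 0`) and `i'` (for `t = 1`). -/
def Pg' (k : ℕ) (t : Fin 2) : GadgetV' k := Sum.inl t

/-- Left-clique vertex `l_{a+1}` (the vertex with `a = k-1` is the merged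
vertex `l_k = r_k`). -/
def Lg' (k : ℕ) (a : Fin k) : GadgetV' k := Sum.inr (Sum.inl a)

/-- Right-clique vertex `r_{a+1}` for `a < k-1`. -/
def Rg' (k : ℕ) (a : Fin (k - 1)) : GadgetV' k := Sum.inr (Sum.inr (Sum.inl a))

/-- Precoloured vertices: `W' k 0` is precoloured `c`, `W' k 1` is
precoloured `c'`. -/
def Wg' (k : ℕ) (t : Fin 2) : GadgetV' k := Sum.inr (Sum.inr (Sum.inr t))

/-- The gadget graph `D(i,i',c,c')` for `c ≠ c'`: two `k`-cliques sharing
exactly the vertex `l_k = r_k`, pigeon `i` joined to `l_1`, pigeon `i'`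
joined to `r_1`, a vertex (precoloured `c`) joined to `l_2,…,l_{k-1}`, and a
vertex (precoloured `c'`) joined to `r_2,…,r_{k-1}`. -/
def gadgetDiff (k : ℕ) : SimpleGraph (GadgetV' k) :=
  SimpleGraph.fromRel (fun x y =>
    (∃ a b : Fin k, a ≠ b ∧ x = Lg' k a ∧ y = Lg' k b) ∨
    (∃ a b : Fin (k - 1), a ≠ b ∧ x = Rg' k a ∧ y = Rg' k b) ∨
    (∃ (a : Fin (k - 1)) (s : Fin k), (s : ℕ) = k - 1 ∧ x = Rg' k a ∧ y = Lg' k s) ∨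
    (∃ a : Fin k, (a : ℕ) = 0 ∧ x = Pg' k 0 ∧ y = Lg' k a) ∨
    (∃ a : Fin (k - 1), (a : ℕ) = 0 ∧ x = Pg' k 1 ∧ y = Rg' k a) ∨
    (∃ a : Fin k, 1 ≤ (a : ℕ) ∧ (a : ℕ) ≤ k - 2 ∧ x = Wg' k 0 ∧ y = Lg' k a) ∨
    (∃ a : Fin (k - 1), 1 ≤ (a : ℕ) ∧ x = Wg' k 1 ∧ y = Rg' k a))

theorem stmt_7 (k : ℕ) (hk : 3 ≤ k) (c c' b b' : Fin k) (hcc : c ≠ c') :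
    (∃ χ : GadgetV' k → Fin k,
      (∀ u v, (gadgetDiff k).Adj u v → χ u ≠ χ v) ∧
      χ (Wg' k 0) = c ∧ χ (Wg' k 1) = c' ∧
      χ (Pg' k 0) = b ∧ χ (Pg' k 1) = b') ↔
    (b, b') ≠ (c, c') := by
  have hlast : k - 1 < k := by omega
  have hzero : 0 < k := by omega
  set lastk : Fin k := ⟨k - 1, hlast⟩ with hlastk
  set zerok : Fin k := ⟨0, hzero⟩ with hzerok
  constructor
  · rintro ⟨χ, hχ, hW0, hW1, hP0, hP1⟩ heq
    rw [Prod.mk.injEq] at heq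
    obtain ⟨hbc, hbc'⟩ := heq
    -- edge facts
    have hLL : ∀ a e : Fin k, a ≠ e → χ (Lg' k a) ≠ χ (Lg' k e) := by
      intro a e hae
      apply hχ
      rw [gadgetDiff, SimpleGraph.fromRel_adj]
      refine ⟨?_, Or.inl (Or.inl ⟨a, e, hae, rfl, rfl⟩)⟩
      simp only [Lg', Ne]
      intro h
      exact hae (Sum.inl_injective (Sum.inr_injective h))
    have hRR : ∀ a e : Fin (k - 1), a ≠ e → χ (Rg' k a) ≠ χ (Rg' k e) := by
      intro a e hae
      apply hχ
      rw [gadgetDiff, SimpleGraph.fromRel_adj]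
      refine ⟨?_, Or.inl (Or.inr (Or.inl ⟨a, e, hae, rfl, rfl⟩))⟩
      simp only [Rg', Ne]
      intro h
      exact hae (Sum.inl_injective (Sum.inr_injective (Sum.inr_injective h)))
    have hRL : ∀ a : Fin (k - 1), χ (Rg' k a) ≠ χ (Lg' k lastk) := by
      intro a
      apply hχ
      rw [gadgetDiff, SimpleGraph.fromRel_adj]
      refine ⟨?_, Or.inl (Or.inr (Or.inr (Or.inl ⟨a, lastk, rfl, rfl, rfl⟩)))⟩
      simp only [Rg', Lg', Ne]
      intro h
      exact absurd (Sum.inr_injective h) (by simp)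
    have hP0L : χ (Pg' k 0) ≠ χ (Lg' k zerok) := by
      apply hχ
      rw [gadgetDiff, SimpleGraph.fromRel_adj]
      refine ⟨?_, Or.inl (Or.inr (Or.inr (Or.inr (Or.inl ⟨zerok, rfl, rfl, rfl⟩))))⟩
      simp only [Pg', Lg', Ne]
      intro h
      exact absurd h (by simp)
    have hP1R : ∀ a : Fin (k - 1), (a : ℕ) = 0 → χ (Pg' k 1) ≠ χ (Rg' k a) := by
      intro a ha
      apply hχ
      rw [gadgetDiff, SimpleGraph.fromRel_adj]
      refine ⟨?_, Or.inl (Or.inr (Or.inr (Or.inr (Or.inr (Or.inl ⟨a, ha, rfl, rfl⟩)))))⟩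
      simp only [Pg', Rg', Ne]
      intro h
      exact absurd h (by simp)
    have hW0L : ∀ a : Fin k, 1 ≤ (a : ℕ) → (a : ℕ) ≤ k - 2 → χ (Wg' k 0) ≠ χ (Lg' k a) := by
      intro a h1 h2
      apply hχ
      rw [gadgetDiff, SimpleGraph.fromRel_adj]
      refine ⟨?_, Or.inl (Or.inr (Or.inr (Or.inr (Or.inr (Or.inr (Or.inl ⟨a, h1, h2, rfl, rfl⟩))))))⟩
      simp only [Wg', Lg', Ne]
      intro h
      exact absurd (Sum.inr_injective h) (by simp)
    have hW1R : ∀ a : Fin (k - 1), 1 ≤ (a : ℕ) → χ (Wg' k 1) ≠ χ (Rg' k a) := by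
      intro a h1
      apply hχ
      rw [gadgetDiff, SimpleGraph.fromRel_adj]
      refine ⟨?_, Or.inl (Or.inr (Or.inr (Or.inr (Or.inr (Or.inr (Or.inr ⟨a, h1, rfl, rfl⟩))))))⟩
      simp only [Wg', Rg', Ne]
      intro h
      exact absurd (Sum.inr_injective (Sum.inr_injective h)) (by simp)
    -- left clique surjectivity
    have hfinj : Function.Injective (fun a : Fin k => χ (Lg' k a)) := by
      intro a e hae
      by_contra hne
      exact hLL a e hne hae
    obtain ⟨a, ha⟩ := Finite.injective_iff_surjective.mp hfinj c
    simp only at ha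
    have halast : a = lastk := by
      by_contra hane
      have ha0 : (a : ℕ) ≠ 0 := by
        intro h0
        have haz : a = zerok := Fin.ext h0
        rw [haz] at ha
        exact hP0L (by rw [hP0, ha, hbc])
      have hbnd : 1 ≤ (a : ℕ) ∧ (a : ℕ) ≤ k - 2 := by
        have h1 := a.isLt
        have h2 : (a : ℕ) ≠ k - 1 := fun h => hane (Fin.ext h)
        constructor <;> omega
      exact hW0L a hbnd.1 hbnd.2 (by rw [hW0, ha])
    rw [halast] at ha
    -- right clique (with merged vertex) surjectivity
    have hginj : Function.Injective (fun x : Fin k =>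
        if h : (x : ℕ) < k - 1 then χ (Rg' k ⟨(x : ℕ), h⟩) else χ (Lg' k lastk)) := by
      intro x y hxy
      simp only at hxy
      by_cases hx : (x : ℕ) < k - 1 <;> by_cases hy : (y : ℕ) < k - 1
      · rw [dif_pos hx, dif_pos hy] at hxy
        have hxy' : (⟨(x : ℕ), hx⟩ : Fin (k - 1)) = ⟨(y : ℕ), hy⟩ := by
          by_contra hne
          exact hRR _ _ hne hxy
        have := congrArg Fin.val hxy'
        exact Fin.ext this
      · rw [dif_pos hx, dif_neg hy] at hxy
        exact absurd hxy (hRL _)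
      · rw [dif_neg hx, dif_pos hy] at hxy
        exact absurd hxy.symm (hRL _)
      · have h1 := x.isLt
        have h2 := y.isLt
        apply Fin.ext
        omega
    obtain ⟨x, hx⟩ := Finite.injective_iff_surjective.mp hginj c'
    simp only at hx
    by_cases hxlt : (x : ℕ) < k - 1
    · rw [dif_pos hxlt] at hx
      by_cases hx0 : (x : ℕ) = 0
      · exact hP1R ⟨(x : ℕ), hxlt⟩ hx0 (by rw [hP1, hx, hbc'])
      · refine hW1R ⟨(x : ℕ), hxlt⟩ ?_ (by rw [hW1, hx])
        show 1 ≤ ((⟨(x : ℕ), hxlt⟩ : Fin (k - 1)) : ℕ)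
        simp only [Fin.val_mk]
        omega
    · rw [dif_neg hxlt] at hx
      exact hcc (ha.symm.trans hx)
  · intro hne
    -- choose m, t0, t1
    obtain ⟨m, t0, t1, hm0, hm1, hbt0, hbt1, hc, hc'⟩ :
        ∃ m t0 t1 : Fin k, m ≠ t0 ∧ m ≠ t1 ∧ b ≠ t0 ∧ b' ≠ t1 ∧
          (c = t0 ∨ c = m) ∧ (c' = t1 ∨ c' = m) := by
      by_cases hbc : b = c
      · have hbc' : b' ≠ c' := by
          intro h; exact hne (by rw [hbc, h])
        refine ⟨c, c', c', hcc, hcc, ?_, hbc', Or.inr rfl, Or.inl rfl⟩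
        rw [hbc]; exact hcc
      · by_cases hbc' : b' = c'
        · refine ⟨c', c, c, hcc.symm, hcc.symm, hbc, ?_, Or.inl rfl, Or.inr rfl⟩
          rw [hbc']; exact hcc.symm
        · obtain ⟨m, hm, hm'⟩ := exists_third hk c c'
          exact ⟨m, c, c', hm, hm', hbc, hbc', Or.inl rfl, Or.inl rfl⟩
    obtain ⟨πL, hπLl, hπL0⟩ := perm2_spec (by omega) m t0 hm0
    obtain ⟨πR, hπRl, hπR0⟩ := perm2_spec (by omega) m t1 hm1
    have hcast : ∀ a : Fin (k - 1), (a : ℕ) < k := fun a => lt_of_lt_of_le a.isLt (by omega)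
    set χ : GadgetV' k → Fin k := fun v =>
      Sum.elim (fun t : Fin 2 => if t = 0 then b else b')
        (Sum.elim (fun a : Fin k => πL a)
          (Sum.elim (fun a : Fin (k - 1) => πR ⟨(a : ℕ), hcast a⟩)
            (fun t : Fin 2 => if t = 0 then c else c'))) v with hχdef
    have hχL : ∀ a : Fin k, χ (Lg' k a) = πL a := fun a => rfl
    have hχR : ∀ a : Fin (k - 1), χ (Rg' k a) = πR ⟨(a : ℕ), hcast a⟩ := fun a => rfl
    have hχP0 : χ (Pg' k 0) = b := rfl
    have hχP1 : χ (Pg' k 1) = b' := rfl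
    have hχW0 : χ (Wg' k 0) = c := rfl
    have hχW1 : χ (Wg' k 1) = c' := rfl
    refine ⟨χ, ?_, hχW0, hχW1, hχP0, hχP1⟩
    have key : ∀ u v : GadgetV' k,
        ((∃ a e : Fin k, a ≠ e ∧ u = Lg' k a ∧ v = Lg' k e) ∨
        (∃ a e : Fin (k - 1), a ≠ e ∧ u = Rg' k a ∧ v = Rg' k e) ∨
        (∃ (a : Fin (k - 1)) (s : Fin k), (s : ℕ) = k - 1 ∧ u = Rg' k a ∧ v = Lg' k s) ∨
        (∃ a : Fin k, (a : ℕ) = 0 ∧ u = Pg' k 0 ∧ v = Lg' k a) ∨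
        (∃ a : Fin (k - 1), (a : ℕ) = 0 ∧ u = Pg' k 1 ∧ v = Rg' k a) ∨
        (∃ a : Fin k, 1 ≤ (a : ℕ) ∧ (a : ℕ) ≤ k - 2 ∧ u = Wg' k 0 ∧ v = Lg' k a) ∨
        (∃ a : Fin (k - 1), 1 ≤ (a : ℕ) ∧ u = Wg' k 1 ∧ v = Rg' k a)) →
        χ u ≠ χ v := by
      rintro u v (⟨a, e, hae, rfl, rfl⟩ | ⟨a, e, hae, rfl, rfl⟩ | ⟨a, s, hs, rfl, rfl⟩ |
        ⟨a, ha, rfl, rfl⟩ | ⟨a, ha, rfl, rfl⟩ | ⟨a, h1, h2, rfl, rfl⟩ | ⟨a, h1, rfl, rfl⟩)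
      · rw [hχL, hχL]
        exact πL.injective.ne hae
      · rw [hχR, hχR]
        refine πR.injective.ne ?_
        intro h
        have hv : ((⟨(a : ℕ), hcast a⟩ : Fin k) : ℕ) = ((⟨(e : ℕ), hcast e⟩ : Fin k) : ℕ) :=
          congrArg Fin.val h
        simp only [Fin.val_mk] at hv
        exact hae (Fin.ext hv)
      · rw [hχR, hχL]
        have hsl : s = lastk := Fin.ext hs
        rw [hsl, hπLl, ← hπRl]
        refine πR.injective.ne ?_
        have hlt := a.isLt
        intro h
        have hv := congrArg Fin.val h
        simp only at hv
        omega
      · rw [hχP0, hχL]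
        have haz : a = zerok := Fin.ext ha
        rw [haz, hπL0]
        exact hbt0
      · rw [hχP1, hχR]
        have haz : (⟨(a : ℕ), hcast a⟩ : Fin k) = zerok := Fin.ext ha
        rw [haz, hπR0]
        exact hbt1
      · rw [hχW0, hχL]
        rcases hc with hc | hc
        · rw [hc, ← hπL0]
          refine πL.injective.ne ?_
          intro h
          have hv := congrArg Fin.val h
          simp only [hzerok] at hv
          omega
        · rw [hc, ← hπLl]
          refine πL.injective.ne ?_
          intro h
          have hv := congrArg Fin.val h
          simp only [hlastk] at hv
          omega
      · rw [hχW1, hχR]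
        rcases hc' with hc' | hc'
        · rw [hc', ← hπR0]
          refine πR.injective.ne ?_
          intro h
          have hv := congrArg Fin.val h
          simp only [hzerok] at hv
          omega
        · rw [hc', ← hπRl]
          refine πR.injective.ne ?_
          intro h
          have hv := congrArg Fin.val h
          simp only [hlastk] at hv
          have hlt := a.isLt
          omega
    intro u v huv
    rw [gadgetDiff, SimpleGraph.fromRel_adj] at huv
    rcases huv with ⟨_, h | h⟩
    · exact key u v h
    · exact (key v u h).symm
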